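/- arXiv:2604.24809 — 2 statements merged into one kernel-verified Lean document; each statement's English description precedes it below -/
import Mathlib

section
/- SCA subsumes arbitrary linear combinations (regularized form of Corollary 4): let h_1, …, h_t be pairwise distinct vectors in ℝ^d and let α_1, …, α_t ∈ ℝ be arbitrary coefficients (not assumed non-negative or summing to one). With the composite spectral query w(θ) = Σ_{k=1}^{t} α_k w_k(θ), as σ → 0⁺ the Gaussian-regularized readout (4πσ)^{d/2} ∫_{ℝ^d} S(θ) · conj(w(θ)) · e^{−σ‖θ‖²} dθ converges to Σ_{k=1}^{t} α_k h_k. -/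
/-! Expanding `S · conj w` turns the integrand into `(2π)^{-d} ∑_{j,k} α_k h_j e^{i⟨h_j - h_k, θ⟩}`,
so the readout is a combination of Fourier transforms of the Gaussian `e^{-σ‖θ‖²}`. The
normalisation `(4πσ)^{d/2}` cancels the Gaussian's mass against `(2π)^{-d}`, leaving exactly
`∑_{j,k} α_k h_j e^{-‖h_j - h_k‖²/(4σ)}`. As `σ → 0⁺` the diagonal kernels stay equal to `1`,
while the off-diagonal ones vanish because the `h_k` are pairwise distinct. -/

open MeasureTheory Real Filter RealInnerProductSpace

/-- The derivative characteristic summary `S(θ) = (i/t) ∑ₖ hₖ e^{i⟨θ,hₖ⟩}` (componentwise). -/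
noncomputable def seqSummary {d t : ℕ} (h : Fin t → EuclideanSpace ℝ (Fin d))
    (θ : EuclideanSpace ℝ (Fin d)) : Fin d → ℂ :=
  fun l => (Complex.I / (t : ℂ)) *
    ∑ k, (h k l : ℂ) * Complex.exp (Complex.I * (⟪θ, h k⟫ : ℝ))

/-- The spectral query `w_k(θ) = (i t/(2π)^d) e^{i⟨θ,hₖ⟩}`. -/
noncomputable def spectralQuery {d t : ℕ} (h : Fin t → EuclideanSpace ℝ (Fin d))
    (k : Fin t) (θ : EuclideanSpace ℝ (Fin d)) : ℂ :=
  (Complex.I * (t : ℂ) / ((2 * Real.pi) ^ d : ℝ)) *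
    Complex.exp (Complex.I * (⟪θ, h k⟫ : ℝ))

open Complex in
theorem rpow_mul_integral_cexp_neg_mul_sq_norm_add_inner {V : Type*} [NormedAddCommGroup V]
    [InnerProductSpace ℝ V] [FiniteDimensional ℝ V] [MeasurableSpace V] [BorelSpace V]
    {σ : ℝ} (hσ : 0 < σ) (v : V) :
    (((4 * π * σ) ^ ((Module.finrank ℝ V : ℝ) / 2) : ℝ) : ℂ) *
        ∫ θ : V, cexp (-(σ : ℂ) * ‖θ‖ ^ 2 + I * ⟪v, θ⟫)
      = (((2 * π) ^ Module.finrank ℝ V * Real.exp (-‖v‖ ^ 2 / (4 * σ)) : ℝ) : ℂ) := by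
  set n := Module.finrank ℝ V
  rw [GaussianFourier.integral_cexp_neg_mul_sq_norm_add (by simpa using hσ)]
  have hprefactor : (4 * π * σ) ^ ((n : ℝ) / 2) * (π / σ) ^ ((n : ℝ) / 2) = (2 * π) ^ n := by
    rw [← Real.mul_rpow (by positivity) (by positivity),
      show 4 * π * σ * (π / σ) = (2 * π) ^ 2 by field_simp; ring,
      ← Real.rpow_natCast_mul (by positivity), Nat.cast_ofNat, mul_div_cancel₀ _ two_ne_zero,
      Real.rpow_natCast]
  have hcpow : (π / (σ : ℂ)) ^ ((n : ℂ) / 2) = (((π / σ) ^ ((n : ℝ) / 2) : ℝ) : ℂ) := by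
    rw [Complex.ofReal_cpow (by positivity)]
    push_cast
    rfl
  rw [hcpow, ← mul_assoc, ← Complex.ofReal_mul, hprefactor, Complex.ofReal_mul,
    Complex.ofReal_exp]
  congr 2
  rw [Complex.I_sq]
  push_cast
  ring

theorem tendsto_exp_neg_div_mul_nhdsGT_zero {b c : ℝ} (hb : 0 < b) (hc : 0 < c) :
    Tendsto (fun σ : ℝ => Real.exp (-c / (b * σ))) (nhdsWithin 0 (Set.Ioi 0)) (nhds 0) := by
  have hatBot : Tendsto (fun σ : ℝ => -c / (b * σ)) (nhdsWithin 0 (Set.Ioi 0)) atBot := by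
    refine (tendsto_neg_atTop_atBot.comp
      ((tendsto_inv_nhdsGT_zero (𝕜 := ℝ)).const_mul_atTop (div_pos hc hb))).congr fun σ => ?_
    simp only [Function.comp_apply]
    field_simp
  exact Real.tendsto_exp_atBot.comp hatBot

section Readout

variable {d t : ℕ} (h : Fin t → EuclideanSpace ℝ (Fin d))

open Complex ComplexConjugate in
theorem seqSummary_mul_conj_sum_spectralQuery (ht : t ≠ 0) (α : Fin t → ℝ)
    (θ : EuclideanSpace ℝ (Fin d)) (l : Fin d) :
    seqSummary h θ l * conj (∑ k, (α k : ℂ) * spectralQuery h k θ)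
      = ∑ j, ∑ k, (α k * h j l / (2 * π) ^ d : ℝ) * cexp (I * ⟪h j - h k, θ⟫) := by
  have hexp : ∀ j k, cexp (I * ⟪h j - h k, θ⟫)
      = cexp (I * ⟪θ, h j⟫) * cexp (-(I * ⟪θ, h k⟫)) := by
    intro j k
    rw [← Complex.exp_add, inner_sub_left, real_inner_comm θ, real_inner_comm θ]
    push_cast
    ring_nf
  have hconj : ∀ k, conj (spectralQuery h k θ)
      = -(I * t / ((2 * π) ^ d : ℝ)) * cexp (-(I * ⟪θ, h k⟫)) := by
    intro k
    simp only [spectralQuery, map_mul, map_div₀, conj_I, map_natCast, conj_ofReal, ← exp_conj]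
    ring_nf
  simp only [seqSummary, map_sum, map_mul, conj_ofReal, hconj, hexp, Finset.mul_sum,
    Finset.sum_mul]
  rw [Finset.sum_comm]
  refine Finset.sum_congr rfl fun j _ => Finset.sum_congr rfl fun k _ => ?_
  have : (t : ℂ) ≠ 0 := Nat.cast_ne_zero.2 ht
  have : (((2 * π) ^ d : ℝ) : ℂ) ≠ 0 := by exact_mod_cast (by positivity : (2 * π) ^ d ≠ 0)
  push_cast
  field_simp
  ring_nf
  rw [I_sq]
  ring

noncomputable def regularizedReadout (α : Fin t → ℝ) (σ : ℝ) : Fin d → ℂ :=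
  ((4 * Real.pi * σ) ^ ((d : ℝ) / 2) : ℝ) •
    ∫ θ : EuclideanSpace ℝ (Fin d),
      (fun l : Fin d =>
        seqSummary h θ l * (starRingEnd ℂ) (∑ k, (α k : ℂ) * spectralQuery h k θ) *
          (Real.exp (-σ * ‖θ‖ ^ 2) : ℂ))

open Complex in
theorem regularizedReadout_eq_sum_exp (ht : t ≠ 0) (α : Fin t → ℝ) {σ : ℝ} (hσ : 0 < σ) :
    regularizedReadout h α σ
      = fun l => ∑ j, ∑ k, ((α k * h j l * Real.exp (-‖h j - h k‖ ^ 2 / (4 * σ)) : ℝ) : ℂ) := by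
  have hintegrable : ∀ j k, Integrable fun θ : EuclideanSpace ℝ (Fin d) =>
      cexp (-(σ : ℂ) * ‖θ‖ ^ 2 + I * ⟪h j - h k, θ⟫) := fun j k =>
    GaussianFourier.integrable_cexp_neg_mul_sq_norm_add (by simpa using hσ) I (h j - h k)
  have hintegrand : ∀ θ l,
      seqSummary h θ l * (starRingEnd ℂ) (∑ k, (α k : ℂ) * spectralQuery h k θ) *
          (Real.exp (-σ * ‖θ‖ ^ 2) : ℂ)
        = ∑ j, ∑ k, (α k * h j l / (2 * π) ^ d : ℝ) *
            cexp (-(σ : ℂ) * ‖θ‖ ^ 2 + I * ⟪h j - h k, θ⟫) := by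
    intro θ l
    simp only [seqSummary_mul_conj_sum_spectralQuery h ht, Finset.sum_mul]
    refine Finset.sum_congr rfl fun j _ => Finset.sum_congr rfl fun k _ => ?_
    rw [mul_assoc, ofReal_exp, ← Complex.exp_add]
    congr 2
    push_cast
    ring
  funext l
  rw [regularizedReadout, Pi.smul_apply, eval_integral fun l => ?integrable]
  case integrable =>
    simp only [hintegrand]
    exact integrable_finsetSum _ fun j _ =>
      integrable_finsetSum _ fun k _ => (hintegrable j k).const_mul _
  simp only [hintegrand]
  rw [integral_finsetSum _ fun j _ =>
    integrable_finsetSum _ fun k _ => (hintegrable j k).const_mul _]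
  simp only [integral_finsetSum _ fun k _ => (hintegrable _ k).const_mul _,
    integral_const_mul, real_smul, Finset.mul_sum]
  refine Finset.sum_congr rfl fun j _ => Finset.sum_congr rfl fun k _ => ?_
  have hgauss := rpow_mul_integral_cexp_neg_mul_sq_norm_add_inner
    (V := EuclideanSpace ℝ (Fin d)) hσ (h j - h k)
  rw [finrank_euclideanSpace_fin] at hgauss
  rw [mul_left_comm, hgauss]
  have : (2 * π) ^ d ≠ 0 := by positivity
  push_cast
  field_simp

end Readout

/-- **SCA subsumes arbitrary linear combinations (regularized form of Corollary 4).**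
For pairwise distinct `h₁, …, h_t ∈ ℝ^d` and arbitrary coefficients `αₖ ∈ ℝ`, with the
composite spectral query `w = ∑ₖ αₖ wₖ`, as `σ → 0⁺` the Gaussian-regularized readout
`(4πσ)^{d/2} ∫ S(θ) * conj (w θ) * e^{−σ‖θ‖²} dθ` converges to `∑ₖ αₖ hₖ`. -/
theorem sca_subsumes_linear_combinations
    (d t : ℕ) (ht : 0 < t) (h : Fin t → EuclideanSpace ℝ (Fin d))
    (hdist : Function.Injective h) (α : Fin t → ℝ) :
    Tendsto
      (fun σ : ℝ =>
        ((4 * Real.pi * σ) ^ ((d : ℝ) / 2) : ℝ) •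
          ∫ θ : EuclideanSpace ℝ (Fin d),
            (fun l : Fin d =>
              seqSummary h θ l *
                (starRingEnd ℂ) (∑ k, (α k : ℂ) * spectralQuery h k θ) *
                (Real.exp (-σ * ‖θ‖ ^ 2) : ℂ)))
      (nhdsWithin 0 (Set.Ioi 0))
      (nhds (fun l : Fin d => ∑ k, (α k : ℂ) * (h k l : ℂ))) := by
  change Tendsto (regularizedReadout h α) _ _
  have hkernel : ∀ j k, Tendsto (fun σ : ℝ => Real.exp (-‖h j - h k‖ ^ 2 / (4 * σ)))
      (nhdsWithin 0 (Set.Ioi 0)) (nhds (if j = k then 1 else 0)) := by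
    intro j k
    split_ifs with hjk
    · simp [hjk]
    · have : h j - h k ≠ 0 := sub_ne_zero.2 (hdist.ne hjk)
      exact tendsto_exp_neg_div_mul_nhdsGT_zero four_pos (by positivity)
  refine tendsto_pi_nhds.2 fun l => ?_
  have hlimit : Tendsto
      (fun σ : ℝ => ∑ j, ∑ k, ((α k * h j l * Real.exp (-‖h j - h k‖ ^ 2 / (4 * σ)) : ℝ) : ℂ))
      (nhdsWithin 0 (Set.Ioi 0))
      (nhds (∑ j, ∑ k, ((α k * h j l * if j = k then 1 else 0 : ℝ) : ℂ))) :=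
    tendsto_finsetSum _ fun j _ => tendsto_finsetSum _ fun k _ =>
      (Complex.continuous_ofReal.tendsto _).comp ((hkernel j k).const_mul _)
  have hreadout : ∀ᶠ σ in nhdsWithin 0 (Set.Ioi 0), regularizedReadout h α σ l
      = ∑ j, ∑ k, ((α k * h j l * Real.exp (-‖h j - h k‖ ^ 2 / (4 * σ)) : ℝ) : ℂ) := by
    filter_upwards [self_mem_nhdsWithin] with σ hσ
    rw [regularizedReadout_eq_sum_exp h ht.ne' α hσ]
  have hvalue : ∑ j, ∑ k, ((α k * h j l * if j = k then 1 else 0 : ℝ) : ℂ)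
      = ∑ k, (α k : ℂ) * (h k l : ℂ) := by
    simp only [mul_ite, mul_one, mul_zero, apply_ite Complex.ofReal, Complex.ofReal_zero,
      Finset.sum_ite_eq, Finset.mem_univ, if_true, Complex.ofReal_mul]
  rw [← hvalue]
  exact hlimit.congr' (EventuallyEq.symm hreadout)
end

section
/- SCA reproduces softmax attention (special case of Corollary 4): let h_1, …, h_t be pairwise distinct vectors in ℝ^d and let q ∈ ℝ^d be any query vector. Define the softmax weights α_k = exp(⟨q,h_k⟩) / Σ_{l=1}^{t} exp(⟨q,h_l⟩) and the composite spectral query w(θ) = Σ_{k=1}^{t} α_k w_k(θ). Then as σ → 0⁺ the Gaussian-regularized readout (4πσ)^{d/2} ∫_{ℝ^d} S(θ) · conj(w(θ)) · e^{−σ‖θ‖²} dθ converges to the softmax attention output Σ_{k=1}^{t} α_k h_k. -/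
/-!
Since `(i/t) · conj (i t/(2π)^d) = (2π)^{-d}`, expanding both sums turns the integrand into
`(2π)^{-d} ∑_{k,j} α_j h_k exp(-σ‖θ‖² + i⟨h_k - h_j, θ⟩)`. The Fourier transform of the Gaussian
gives each term the value `(π/σ)^{d/2} exp(-‖h_k - h_j‖²/(4σ))`, and `(4πσ)^{d/2} (π/σ)^{d/2}`
is exactly `(2π)^d`, so the readout equals `∑_{k,j} α_j h_k exp(-‖h_k - h_j‖²/(4σ))`. As `σ → 0⁺`
the heat-kernel factor tends to `1` on the diagonal and, the `h_k` being distinct, to `0` off it.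
-/

open MeasureTheory Real Filter RealInnerProductSpace

/-- The softmax attention weights `αₖ = exp⟨q,hₖ⟩ / ∑ₗ exp⟨q,hₗ⟩`. -/
noncomputable def softmaxWeight {d t : ℕ} (h : Fin t → EuclideanSpace ℝ (Fin d))
    (q : EuclideanSpace ℝ (Fin d)) (k : Fin t) : ℝ :=
  Real.exp (⟪q, h k⟫ : ℝ) / ∑ l, Real.exp (⟪q, h l⟫ : ℝ)

section Gaussian

variable {V : Type*} [NormedAddCommGroup V] [InnerProductSpace ℝ V] [FiniteDimensional ℝ V]
  [MeasurableSpace V] [BorelSpace V]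

theorem integrable_cexp_neg_mul_norm_sq_add_I_mul_inner {σ : ℝ} (hσ : 0 < σ) (w : V) :
    Integrable fun v : V => Complex.exp (-σ * ‖v‖ ^ 2 + Complex.I * ⟪w, v⟫) :=
  GaussianFourier.integrable_cexp_neg_mul_sq_norm_add (by simpa using hσ) _ w

theorem integral_cexp_neg_mul_norm_sq_add_I_mul_inner {σ : ℝ} (hσ : 0 < σ) (w : V) :
    ∫ v : V, Complex.exp (-σ * ‖v‖ ^ 2 + Complex.I * ⟪w, v⟫) =
      ((π / σ) ^ ((Module.finrank ℝ V : ℝ) / 2) * Real.exp (-‖w‖ ^ 2 / (4 * σ)) : ℝ) := by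
  rw [GaussianFourier.integral_cexp_neg_mul_sq_norm_add (by simpa using hσ), Complex.ofReal_mul,
    Complex.ofReal_cpow (by positivity), Complex.ofReal_exp]
  push_cast
  rw [Complex.I_sq, neg_one_mul, neg_div]

end Gaussian

theorem four_pi_mul_rpow_mul_pi_div_rpow {σ : ℝ} (hσ : 0 < σ) (n : ℕ) :
    (4 * π * σ) ^ ((n : ℝ) / 2) * (π / σ) ^ ((n : ℝ) / 2) = (2 * π) ^ n := by
  rw [← Real.mul_rpow (by positivity) (by positivity),
    show 4 * π * σ * (π / σ) = (2 * π) ^ 2 by field_simp; ring,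
    ← Real.rpow_natCast_mul (by positivity), Nat.cast_ofNat, mul_div_cancel₀ _ two_ne_zero,
    Real.rpow_natCast]

theorem tendsto_exp_neg_norm_sq_div_nhdsGT_zero {E : Type*} [NormedAddCommGroup E] {v : E}
    (hv : v ≠ 0) :
    Tendsto (fun σ : ℝ => Real.exp (-‖v‖ ^ 2 / (4 * σ))) (nhdsWithin 0 (Set.Ioi 0)) (nhds 0) := by
  have hneg : -‖v‖ ^ 2 / 4 < 0 := by have := norm_pos_iff.mpr hv; nlinarith
  exact Real.tendsto_exp_atBot.comp
    ((tendsto_inv_nhdsGT_zero.const_mul_atTop_of_neg hneg).congr fun σ => by ring)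

theorem tendsto_sum_sum_exp_neg_norm_sub_sq_div_smul {ι E F : Type*} [Fintype ι]
    [NormedAddCommGroup E] [NormedAddCommGroup F] [NormedSpace ℝ F] {h : ι → E}
    (hh : Function.Injective h) (f : ι → ι → F) :
    Tendsto (fun σ : ℝ => ∑ k, ∑ j, Real.exp (-‖h k - h j‖ ^ 2 / (4 * σ)) • f k j)
      (nhdsWithin 0 (Set.Ioi 0)) (nhds (∑ k, f k k)) := by
  classical
  have hdiag : ∑ k, f k k = ∑ k, ∑ j, (if k = j then (1 : ℝ) else 0) • f k j := by simp
  rw [hdiag]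
  refine tendsto_finsetSum _ fun k _ => tendsto_finsetSum _ fun j _ => ?_
  rcases eq_or_ne k j with rfl | hkj
  · simp
  · rw [if_neg hkj]
    exact (tendsto_exp_neg_norm_sq_div_nhdsGT_zero (sub_ne_zero.mpr (hh.ne hkj))).smul_const _

theorem seqSummary_mul_conj_sum_spectralQuery_mul_exp {d t : ℕ} (ht : 0 < t)
    (h : Fin t → EuclideanSpace ℝ (Fin d)) (a : Fin t → ℝ) (σ : ℝ)
    (θ : EuclideanSpace ℝ (Fin d)) :
    (fun l : Fin d => seqSummary h θ l *
        (starRingEnd ℂ) (∑ k, (a k : ℂ) * spectralQuery h k θ) * (Real.exp (-σ * ‖θ‖ ^ 2) : ℂ)) =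
      ∑ k, ∑ j, Complex.exp (-σ * ‖θ‖ ^ 2 + Complex.I * ⟪h k - h j, θ⟫) •
        ((2 * π) ^ d)⁻¹ • fun l : Fin d => (a j : ℂ) * (h k l : ℂ) := by
  have ht' : (t : ℂ) ≠ 0 := Nat.cast_ne_zero.mpr ht.ne'
  have hπ : ((2 * π) ^ d : ℂ) ≠ 0 := by exact_mod_cast (by positivity : (2 * π) ^ d ≠ 0)
  ext l
  simp only [seqSummary, spectralQuery, Finset.sum_apply, Pi.smul_apply, smul_eq_mul,
    Complex.real_smul, map_sum, map_mul, map_div₀, Complex.conj_ofReal, Complex.conj_I,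
    map_natCast, ← Complex.exp_conj, Finset.mul_sum, Finset.sum_mul]
  rw [Finset.sum_comm]
  refine Finset.sum_congr rfl fun k _ => Finset.sum_congr rfl fun j _ => ?_
  rw [inner_sub_left, real_inner_comm (h k), real_inner_comm (h j), Complex.ofReal_sub,
    mul_sub, sub_eq_add_neg, ← add_assoc, Complex.exp_add, Complex.exp_add, Complex.ofReal_exp]
  push_cast
  field_simp
  ring_nf
  simp only [Complex.I_sq]
  ring

noncomputable def gaussianReadout {d t : ℕ} (h : Fin t → EuclideanSpace ℝ (Fin d))
    (a : Fin t → ℝ) (σ : ℝ) : Fin d → ℂ :=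
  ((4 * π * σ) ^ ((d : ℝ) / 2) : ℝ) •
    ∫ θ : EuclideanSpace ℝ (Fin d), fun l : Fin d => seqSummary h θ l *
      (starRingEnd ℂ) (∑ k, (a k : ℂ) * spectralQuery h k θ) * (Real.exp (-σ * ‖θ‖ ^ 2) : ℂ)

theorem gaussianReadout_eq_sum_exp_smul {d t : ℕ} (ht : 0 < t)
    (h : Fin t → EuclideanSpace ℝ (Fin d)) (a : Fin t → ℝ) {σ : ℝ} (hσ : 0 < σ) :
    gaussianReadout h a σ =
      ∑ k, ∑ j, Real.exp (-‖h k - h j‖ ^ 2 / (4 * σ)) •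
        fun l : Fin d => (a j : ℂ) * (h k l : ℂ) := by
  have hgauss :=
    integrable_cexp_neg_mul_norm_sq_add_I_mul_inner (V := EuclideanSpace ℝ (Fin d)) hσ
  rw [gaussianReadout, funext (seqSummary_mul_conj_sum_spectralQuery_mul_exp ht h a σ),
    integral_finsetSum _ fun k _ => integrable_finsetSum _ fun j _ => (hgauss _).smul_const _]
  simp only [integral_finsetSum _ fun j _ => (hgauss _).smul_const _, integral_smul_const,
    integral_cexp_neg_mul_norm_sq_add_I_mul_inner hσ, finrank_euclideanSpace_fin,
    Complex.coe_smul, Finset.smul_sum, smul_smul]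
  refine Finset.sum_congr rfl fun k _ => Finset.sum_congr rfl fun j _ => ?_
  congr 1
  rw [← four_pi_mul_rpow_mul_pi_div_rpow hσ d]
  field_simp

/-- **SCA reproduces softmax attention (special case of Corollary 4).**
For pairwise distinct `h₁, …, h_t ∈ ℝ^d` and any query `q ∈ ℝ^d`, with softmax
weights `αₖ` and composite spectral query `w = ∑ₖ αₖ wₖ`, as `σ → 0⁺` the
Gaussian-regularized readout converges to the softmax attention output `∑ₖ αₖ hₖ`. -/
theorem sca_reproduces_softmax_attention
    (d t : ℕ) (ht : 0 < t) (h : Fin t → EuclideanSpace ℝ (Fin d))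
    (hdist : Function.Injective h) (q : EuclideanSpace ℝ (Fin d)) :
    Tendsto
      (fun σ : ℝ =>
        ((4 * Real.pi * σ) ^ ((d : ℝ) / 2) : ℝ) •
          ∫ θ : EuclideanSpace ℝ (Fin d),
            (fun l : Fin d =>
              seqSummary h θ l *
                (starRingEnd ℂ) (∑ k, (softmaxWeight h q k : ℂ) * spectralQuery h k θ) *
                (Real.exp (-σ * ‖θ‖ ^ 2) : ℂ)))
      (nhdsWithin 0 (Set.Ioi 0))
      (nhds (fun l : Fin d => ∑ k, (softmaxWeight h q k : ℂ) * (h k l : ℂ))) := by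
  have hlim := tendsto_sum_sum_exp_neg_norm_sub_sq_div_smul hdist
    fun k j (l : Fin d) => (softmaxWeight h q j : ℂ) * (h k l : ℂ)
  rw [Finset.sum_fn] at hlim
  exact hlim.congr' <| eventually_nhdsWithin_of_forall fun σ hσ =>
    (gaussianReadout_eq_sum_exp_smul ht h (softmaxWeight h q) hσ).symm
end
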